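/- arXiv:1710.09143 — 2 statements merged into one kernel-verified Lean document; each statement's English description precedes it below -/
import Mathlib

section
/- Let A : [n]^k → [N] be a function and let b < log₂ N be a natural number. Define c_n = min over partitions {S_1,…,S_{2^b}} of [n]^k into exactly 2^b parts of max_i N_k(A,S_i) (so that N^h_{k,b}(A) = b + c_n), and define c_d analogously with D_k in place of N_k (so that D^h_{k,b}(A) = b + c_d). Then c_d ≤ (k−1)·2^{c_n} + c_n. -/
/-- Transcript of `c` bits, each bit determined from the previous transcript. -/
def buildTranscript (step : List Bool → Bool) : ℕ → List Bool
  | 0 => []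
  | m + 1 => buildTranscript step m ++ [step (buildTranscript step m)]

/-- A deterministic number-on-the-forehead style protocol with `k` players on input
space `I`, where `Vis i x x'` means player `i` cannot distinguish the inputs `x` and
`x'` (player `i` sees everything except their own input).  The protocol runs for
exactly `c` rounds; in each round a speaker, determined by the transcript so far,
writes one bit on the blackboard, and this bit may depend only on the part of the
input that the speaker sees.  The output is determined by the full transcript. -/
structure DProt (k : ℕ) (I : Type) (Vis : Fin k → I → I → Prop) (Y : Type) (c : ℕ) where
  speaker : List Bool → Fin k
  msg : List Bool → I → Bool
  msg_nof : ∀ t x x', Vis (speaker t) x x' → msg t x = msg t x'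
  out : List Bool → Y

def DProt.run {k I Vis Y c} (P : DProt k I Vis Y c) (x : I) : Y :=
  P.out (buildTranscript (fun t => P.msg t x) c)

/-- Deterministic NOF communication complexity of `f` restricted to `S`. -/
noncomputable def DCC {k : ℕ} {I Y : Type} (Vis : Fin k → I → I → Prop)
    (f : I → Y) (S : Set I) : ℕ :=
  sInf { c | ∃ P : DProt k I Vis Y c, ∀ x ∈ S, P.run x = f x }

/-- A nondeterministic protocol: a prover first provides a proof string of `a` bits,
after which the players communicate `c` bits as in a deterministic protocol (the bits
may depend on the proof). -/
structure NProt (k : ℕ) (I : Type) (Vis : Fin k → I → I → Prop) (Y : Type) (a c : ℕ) where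
  speaker : (Fin a → Bool) → List Bool → Fin k
  msg : (Fin a → Bool) → List Bool → I → Bool
  msg_nof : ∀ p t x x', Vis (speaker p t) x x' → msg p t x = msg p t x'
  out : (Fin a → Bool) → List Bool → Y

def NProt.run {k I Vis Y a c} (P : NProt k I Vis Y a c) (p : Fin a → Bool) (x : I) : Y :=
  P.out p (buildTranscript (fun t => P.msg p t x) c)

/-- Nondeterministic NOF complexity `N_k(A, S)` of the search problem for `A : I → Y`
restricted to `S`: minimum cost (proof length plus communication) of a protocol which
on every input outputs either a value in `Y` or `none` (i.e. "don't know"), never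
outputs a wrong value on inputs in `S`, and on every input of `S` has at least one
proof leading to the correct value. -/
noncomputable def NCC {k : ℕ} {I Y : Type} (Vis : Fin k → I → I → Prop)
    (A : I → Y) (S : Set I) : ℕ :=
  sInf { m | ∃ a c, m = a + c ∧ ∃ P : NProt k I Vis (Option Y) a c,
    ∀ x ∈ S, (∀ p, P.run p x = none ∨ P.run p x = some (A x)) ∧
      ∃ p, P.run p x = some (A x) }

/-- Nondeterministic NOF complexity `N¹_k(f)` of a boolean function `f`: on every
1-input some proof leads to output `true`, and on every 0-input all proofs lead to
output `false`.  The cost is proof length plus communication. -/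
noncomputable def NCCbool {k : ℕ} {I : Type} (Vis : Fin k → I → I → Prop)
    (f : I → Bool) : ℕ :=
  sInf { m | ∃ a c, m = a + c ∧ ∃ P : NProt k I Vis Bool a c,
    ∀ x, f x = true ↔ ∃ p, P.run p x = true }

/-- Deterministic NOF communication complexity with `b` help bits:
`min` over `t ≤ b` and partitions of the input space into `2 ^ t` parts (given by a
coloring `H`) of `t` plus the maximal complexity of a part. -/
noncomputable def DHelp {k : ℕ} {I Y : Type} (Vis : Fin k → I → I → Prop)
    (A : I → Y) (b : ℕ) : ℕ :=
  sInf { m | ∃ t ≤ b, ∃ H : I → Fin (2 ^ t),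
    m = t + Finset.univ.sup fun i => DCC Vis A (H ⁻¹' {i}) }

/-- Nondeterministic NOF communication complexity with `b` help bits. -/
noncomputable def NHelp {k : ℕ} {I Y : Type} (Vis : Fin k → I → I → Prop)
    (A : I → Y) (b : ℕ) : ℕ :=
  sInf { m | ∃ t ≤ b, ∃ H : I → Fin (2 ^ t),
    m = t + Finset.univ.sup fun i => NCC Vis A (H ⁻¹' {i}) }

/-- A one-way protocol: player `last` first sends a message of `a` bits (depending
only on what they see), after which the remaining players communicate `c` more bits
without the participation of player `last`. -/
structure OWProt (k : ℕ) (I : Type) (Vis : Fin k → I → I → Prop) (Y : Type)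
    (last : Fin k) (a c : ℕ) where
  pre : I → Fin a → Bool
  pre_nof : ∀ x x', Vis last x x' → pre x = pre x'
  speaker : (Fin a → Bool) → List Bool → Fin k
  speaker_ne : ∀ p t, speaker p t ≠ last
  msg : (Fin a → Bool) → List Bool → I → Bool
  msg_nof : ∀ p t x x', Vis (speaker p t) x x' → msg p t x = msg p t x'
  out : (Fin a → Bool) → List Bool → Y

def OWProt.run {k I Vis Y last a c} (P : OWProt k I Vis Y last a c) (x : I) : Y :=
  P.out (P.pre x) (buildTranscript (fun t => P.msg (P.pre x) t x) c)

/-- One-way NOF communication complexity `D¹_k(f)`, where player `last` speaks first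
(a single message) and then the other players communicate. -/
noncomputable def OWCC {k : ℕ} {I Y : Type} (Vis : Fin k → I → I → Prop)
    (f : I → Y) (last : Fin k) : ℕ :=
  sInf { m | ∃ a c, m = a + c ∧ ∃ P : OWProt k I Vis Y last a c, ∀ x, P.run x = f x }

/-- Standard NOF visibility: player `i` sees all coordinates except the `i`-th one. -/
def nofVis (k : ℕ) (W : Type) : Fin k → (Fin k → W) → (Fin k → W) → Prop :=
  fun i x x' => ∀ j, j ≠ i → x j = x' j

/-- NOF visibility for `k` players on inputs in `(Fin (k-1) → W) × Z`: players
`0, …, k-2` hold the coordinates of the first component on their foreheads, and the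
`k`-th player (index `k-1`) holds the second component. -/
def liftVis (k : ℕ) (W Z : Type) :
    Fin k → ((Fin (k - 1) → W) × Z) → ((Fin (k - 1) → W) × Z) → Prop :=
  fun i z z' => (∀ j : Fin (k - 1), (j : ℕ) ≠ (i : ℕ) → z.1 j = z'.1 j) ∧
    ((i : ℕ) = k - 1 ∨ z.2 = z'.2)

/-- `C` is a cylinder in coordinate `i`: membership does not depend on coordinate `i`. -/
def IsCylinder (k : ℕ) (W : Type) (i : Fin k) (C : Set (Fin k → W)) : Prop :=
  ∀ x x', (∀ j, j ≠ i → x j = x' j) → (x ∈ C ↔ x' ∈ C)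

/-- `C` is a cylinder intersection: an intersection of cylinders, one per coordinate. -/
def IsCylinderIntersection (k : ℕ) (W : Type) (C : Set (Fin k → W)) : Prop :=
  ∃ Cs : Fin k → Set (Fin k → W), (∀ i, IsCylinder k W i (Cs i)) ∧ C = ⋂ i, Cs i

/-- `disc(A, S, y) = | |A⁻¹(y) ∩ S| - |S| / N | / |X|` where `N` is the number of
colors and `X` is the input space. -/
noncomputable def discVal (k : ℕ) (W Y : Type) (A : (Fin k → W) → Y)
    (S : Set (Fin k → W)) (y : Y) : ℝ :=
  |(Nat.card ↥(A ⁻¹' {y} ∩ S) : ℝ) - (Nat.card ↥S : ℝ) / (Nat.card Y : ℝ)| /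
    (Nat.card (Fin k → W) : ℝ)

/-- Multicolor discrepancy of `A`: the supremum of `disc(A, S, y)` over all cylinder
intersections `S` and all colors `y`. -/
noncomputable def multiDisc (k : ℕ) (W Y : Type) (A : (Fin k → W) → Y) : ℝ :=
  sSup { d : ℝ | ∃ S y, IsCylinderIntersection k W S ∧ d = discVal k W Y A S y }

/-!
A nondeterministic protocol with `a` proof bits and `c` communication bits is simulated
deterministically through certificates: a certificate is a proof together with a claimed
transcript, and player `i` accepts it on `x` when the messages of player `i` in the transcript
are the ones it would send on `x` under that proof, which player `i` can check from what it sees.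
A certificate accepted by every player is the actual run on that proof. The first `k - 1`
players announce, for each of the `2 ^ (a + c)` certificates, whether they accept it; the last
player then writes down a certificate that everybody accepts and that has an output. By
soundness and completeness that output is the correct value, at a cost of
`(k - 1) * 2 ^ (a + c) + (a + c)` bits.
-/

theorem length_buildTranscript (s : List Bool → Bool) (c : ℕ) :
    (buildTranscript s c).length = c := by
  induction c with
  | zero => rfl
  | succ c ih => simp [buildTranscript, ih]

theorem buildTranscript_add (s : List Bool → Bool) (c₁ c₂ : ℕ) :
    buildTranscript s (c₁ + c₂) =
      buildTranscript s c₁ ++ buildTranscript (fun t => s (buildTranscript s c₁ ++ t)) c₂ := by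
  induction c₂ with
  | zero => simp [buildTranscript]
  | succ c₂ ih => rw [← Nat.add_assoc, buildTranscript, buildTranscript, ih, List.append_assoc]

theorem buildTranscript_eq_ofFn_iff (s : List Bool → Bool) {c : ℕ} (g : Fin c → Bool) :
    buildTranscript s c = List.ofFn g ↔ ∀ r : Fin c, s ((List.ofFn g).take r) = g r := by
  induction c with
  | zero => simp [buildTranscript]
  | succ c ih =>
    set g' : Fin c → Bool := fun i => g i.castSucc
    have hg : List.ofFn g = List.ofFn g' ++ [g (Fin.last c)] := List.ofFn_succ_last
    have htake (r : ℕ) (hr : r ≤ c) : (List.ofFn g).take r = (List.ofFn g').take r := by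
      rw [hg, List.take_append_of_le_length (by simpa using hr)]
    rw [Fin.forall_fin_succ', Fin.val_last, htake c le_rfl,
      List.take_of_length_le (by simp)]
    simp only [Fin.val_castSucc, fun i : Fin c => htake i i.is_le']
    rw [← ih g', buildTranscript, hg]
    constructor
    · intro h
      obtain ⟨h₁, h₂⟩ := List.append_inj' h rfl
      exact ⟨h₁, h₁ ▸ List.singleton_inj.mp h₂⟩
    · rintro ⟨h₁, h₂⟩
      rw [h₁, h₂]

noncomputable def slotEquiv (k m : ℕ) : Fin (k * 2 ^ m) ≃ Fin k × (Fin m → Bool) :=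
  finProdFinEquiv.symm.trans <| .prodCongr (.refl _) (Fintype.equivFinOfCardEq (by simp)).symm

structure CertScheme (k : ℕ) (I : Type) (Vis : Fin k → I → I → Prop) (Y : Type) (m : ℕ) where
  accepts : Fin k → (Fin m → Bool) → I → Bool
  accepts_nof : ∀ i w x x', Vis i x x' → accepts i w x = accepts i w x'
  out : (Fin m → Bool) → Option Y

namespace CertScheme

section

variable {k : ℕ} {I : Type} {Vis : Fin k → I → I → Prop} {Y : Type} {m : ℕ}

def Accepted (V : CertScheme k I Vis Y m) (w : Fin m → Bool) (x : I) : Prop :=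
  ∀ i, V.accepts i w x = true

def SolvesOn (V : CertScheme k I Vis Y m) (A : I → Y) (S : Set I) : Prop :=
  ∀ x ∈ S, (∀ w, V.Accepted w x → V.out w = none ∨ V.out w = some (A x)) ∧
    ∃ w, V.Accepted w x ∧ V.out w = some (A x)

end

section Simulation

variable {k : ℕ} {I : Type} {Vis : Fin (k + 1) → I → I → Prop} {Y : Type} {m : ℕ}
  (V : CertScheme (k + 1) I Vis Y m)

noncomputable def announcements (x : I) (l : Fin (k * 2 ^ m)) : Bool :=
  V.accepts (slotEquiv k m l).1.castSucc (slotEquiv k m l).2 x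

def Admissible (board : List Bool) (x : I) (w : Fin m → Bool) : Prop :=
  (∀ j : Fin k, board.getD (slotEquiv k m |>.symm (j, w)) false = true) ∧
    V.accepts (Fin.last k) w x = true ∧ (V.out w).isSome

noncomputable def select (board : List Bool) (x : I) : Fin m → Bool :=
  Classical.epsilon (V.Admissible board x)

theorem select_congr {board : List Bool} {x x' : I} (h : Vis (Fin.last k) x x') :
    V.select board x = V.select board x' := by
  unfold select Admissible
  simp only [V.accepts_nof _ _ x x' h]

noncomputable def toDProt (y₀ : Y) : DProt (k + 1) I Vis Y (k * 2 ^ m + m) where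
  speaker t :=
    if h : t.length < k * 2 ^ m then (slotEquiv k m ⟨t.length, h⟩).1.castSucc else Fin.last k
  msg t x :=
    if h : t.length < k * 2 ^ m then V.announcements x ⟨t.length, h⟩
    else if h' : t.length - k * 2 ^ m < m then
      V.select (t.take (k * 2 ^ m)) x ⟨t.length - k * 2 ^ m, h'⟩
    else false
  msg_nof t x x' hvis := by
    by_cases h : t.length < k * 2 ^ m
    · simp only [dif_pos h] at hvis ⊢
      exact V.accepts_nof _ _ _ _ hvis
    · simp only [dif_neg h] at hvis ⊢
      rw [V.select_congr hvis]
  out t := (V.out fun r => t.getD (k * 2 ^ m + r) false).getD y₀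

theorem buildTranscript_toDProt (y₀ : Y) (x : I) :
    buildTranscript (fun t => (V.toDProt y₀).msg t x) (k * 2 ^ m + m) =
      List.ofFn (V.announcements x) ++
        List.ofFn (V.select (List.ofFn (V.announcements x)) x) := by
  have h₁ : buildTranscript (fun t => (V.toDProt y₀).msg t x) (k * 2 ^ m) =
      List.ofFn (V.announcements x) := by
    rw [buildTranscript_eq_ofFn_iff]
    intro r
    simp [toDProt]
  rw [buildTranscript_add, h₁]
  congr 1
  rw [buildTranscript_eq_ofFn_iff]
  intro r
  simp [toDProt]

theorem admissible_iff (x : I) (w : Fin m → Bool) :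
    V.Admissible (List.ofFn (V.announcements x)) x w ↔ V.Accepted w x ∧ (V.out w).isSome := by
  simp [Admissible, Accepted, announcements, Fin.forall_fin_succ', and_assoc]

theorem run_toDProt {A : I → Y} {S : Set I} (hV : V.SolvesOn A S) (y₀ : Y) {x : I}
    (hx : x ∈ S) :
    (V.toDProt y₀).run x = A x := by
  obtain ⟨hsound, w₀, hw₀, hout₀⟩ := hV x hx
  have hadm : V.Admissible (List.ofFn (V.announcements x)) x
      (V.select (List.ofFn (V.announcements x)) x) :=
    Classical.epsilon_spec ⟨w₀, (V.admissible_iff x w₀).2 ⟨hw₀, by simp [hout₀]⟩⟩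
  obtain ⟨hacc, hsome⟩ := (V.admissible_iff x _).1 hadm
  have hout : V.out (V.select (List.ofFn (V.announcements x)) x) = some (A x) := by
    rcases hsound _ hacc with h | h
    · simp [h] at hsome
    · exact h
  rw [DProt.run, buildTranscript_toDProt]
  simp [toDProt, hout]

end Simulation

end CertScheme

namespace NProt

variable {k : ℕ} {I : Type} {Vis : Fin k → I → I → Prop} {Y : Type} {a c : ℕ}

def SolvesOn (P : NProt k I Vis (Option Y) a c) (A : I → Y) (S : Set I) : Prop :=
  ∀ x ∈ S, (∀ p, P.run p x = none ∨ P.run p x = some (A x)) ∧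
    ∃ p, P.run p x = some (A x)

theorem SolvesOn.exists_cost_eq_NCC {P : NProt k I Vis (Option Y) a c} {A : I → Y} {S : Set I}
    (hP : P.SolvesOn A S) :
    ∃ a' c', NCC Vis A S = a' + c' ∧ ∃ P' : NProt k I Vis (Option Y) a' c', P'.SolvesOn A S :=
  Nat.sInf_mem (s := {m | ∃ a' c', m = a' + c' ∧
    ∃ P' : NProt k I Vis (Option Y) a' c', P'.SolvesOn A S}) ⟨_, a, c, rfl, P, hP⟩

def Consistent (P : NProt k I Vis Y a c) (i : Fin k) (p : Fin a → Bool) (t : Fin c → Bool)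
    (x : I) : Prop :=
  ∀ r : Fin c, P.speaker p ((List.ofFn t).take r) = i → P.msg p ((List.ofFn t).take r) x = t r

instance (P : NProt k I Vis Y a c) (i : Fin k) (p : Fin a → Bool) (t : Fin c → Bool) (x : I) :
    Decidable (P.Consistent i p t x) :=
  inferInstanceAs (Decidable (∀ _ : Fin c, _ → _))

theorem forall_consistent_iff (P : NProt k I Vis Y a c) (p : Fin a → Bool) (t : Fin c → Bool)
    (x : I) :
    (∀ i, P.Consistent i p t x) ↔ buildTranscript (fun u => P.msg p u x) c = List.ofFn t := by
  rw [buildTranscript_eq_ofFn_iff]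
  exact ⟨fun h r => h _ r rfl, fun h _ r _ => h r⟩

def certScheme (P : NProt k I Vis (Option Y) a c) : CertScheme k I Vis Y (a + c) where
  accepts i w x :=
    decide (P.Consistent i ((Fin.appendEquiv a c).symm w).1 ((Fin.appendEquiv a c).symm w).2 x)
  accepts_nof i w x x' h := decide_eq_decide.2 <|
    forall_congr' fun _ => imp_congr_right fun hr => by rw [P.msg_nof _ _ x x' (hr ▸ h)]
  out w := P.out ((Fin.appendEquiv a c).symm w).1 (List.ofFn ((Fin.appendEquiv a c).symm w).2)

theorem SolvesOn.certScheme {P : NProt k I Vis (Option Y) a c} {A : I → Y} {S : Set I}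
    (hP : P.SolvesOn A S) :
    P.certScheme.SolvesOn A S := by
  intro x hx
  obtain ⟨hsound, p₀, hp₀⟩ := hP x hx
  have hrun (w) (hw : P.certScheme.Accepted w x) : P.certScheme.out w =
      P.run ((Fin.appendEquiv a c).symm w).1 x := by
    have := (P.forall_consistent_iff _ _ x).1 fun i => of_decide_eq_true (hw i)
    rw [run, this]; rfl
  refine ⟨fun w hw => hrun w hw ▸ hsound _, ?_⟩
  set T := buildTranscript (fun u => P.msg p₀ u x) c
  have hT : List.ofFn (fun r : Fin c => T.getD r false) = T := by
    apply List.ext_getElem <;> simp [T, length_buildTranscript]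
  set w₀ := Fin.appendEquiv a c (p₀, fun r => T.getD r false)
  have hw₀ : P.certScheme.Accepted w₀ x := fun i => decide_eq_true <| by
    simp only [w₀, Equiv.symm_apply_apply]
    exact (P.forall_consistent_iff _ _ x).2 hT.symm i
  exact ⟨w₀, hw₀, by rw [hrun w₀ hw₀]; simpa [w₀] using hp₀⟩

end NProt

def DProt.toNProt {k : ℕ} {I : Type} {Vis : Fin k → I → I → Prop} {Y : Type} {c : ℕ}
    (D : DProt k I Vis Y c) : NProt k I Vis (Option Y) 0 c where
  speaker _ := D.speaker
  msg _ := D.msg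
  msg_nof _ := D.msg_nof
  out _ t := some (D.out t)

theorem DCC_le_mul_two_pow_NCC {k : ℕ} {I Y : Type} (Vis : Fin k → I → I → Prop)
    (A : I → Y) (S : Set I) : DCC Vis A S ≤ (k - 1) * 2 ^ NCC Vis A S + NCC Vis A S := by
  -- A deterministic protocol provides a speaker, so `k ≠ 0`, and a default output value;
  -- without one, `DCC` is the junk value `sInf ∅ = 0`.
  by_cases hD : ∃ c, ∃ D : DProt k I Vis Y c, ∀ x ∈ S, D.run x = A x
  · obtain ⟨c, D, hD⟩ := hD
    have hD' : D.toNProt.SolvesOn A S := fun x hx =>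
      ⟨fun _ => .inr (congrArg some (hD x hx)), fun _ => 0, congrArg some (hD x hx)⟩
    obtain ⟨a, c', hac, P, hP⟩ := hD'.exists_cost_eq_NCC
    rw [hac]
    cases k with
    | zero => exact (D.speaker []).elim0
    | succ k =>
      rw [Nat.add_sub_cancel]
      exact Nat.sInf_le ⟨P.certScheme.toDProt (D.out []),
        fun x hx => P.certScheme.run_toDProt hP.certScheme _ hx⟩
  · have : DCC Vis A S = 0 :=
      Nat.sInf_eq_zero.2 (.inr (Set.eq_empty_of_forall_notMem fun c hc => hD ⟨c, hc⟩))
    exact this ▸ Nat.zero_le _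

theorem det_help_le_exp_nondet_help_general (k n N b : ℕ)
    (A : (Fin k → Fin n) → Fin N)
    (cn cd : ℕ)
    (hcn : cn = sInf { m | ∃ H : (Fin k → Fin n) → Fin (2 ^ b),
        m = Finset.univ.sup fun i => NCC (nofVis k (Fin n)) A (H ⁻¹' {i}) })
    (hcd : cd = sInf { m | ∃ H : (Fin k → Fin n) → Fin (2 ^ b),
        m = Finset.univ.sup fun i => DCC (nofVis k (Fin n)) A (H ⁻¹' {i}) }) :
    cd ≤ (k - 1) * 2 ^ cn + cn := by
  obtain ⟨H, hH⟩ : cn ∈ { m | ∃ H : (Fin k → Fin n) → Fin (2 ^ b),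
      m = Finset.univ.sup fun i => NCC (nofVis k (Fin n)) A (H ⁻¹' {i}) } :=
    hcn ▸ Nat.sInf_mem ⟨_, fun _ => ⟨0, Nat.two_pow_pos b⟩, rfl⟩
  calc cd ≤ Finset.univ.sup fun i => DCC (nofVis k (Fin n)) A (H ⁻¹' {i}) :=
        hcd ▸ Nat.sInf_le ⟨H, rfl⟩
    _ ≤ (k - 1) * 2 ^ cn + cn := Finset.sup_le fun i _ => by
        have hi : NCC (nofVis k (Fin n)) A (H ⁻¹' {i}) ≤ cn :=
          hH ▸ Finset.le_sup (f := fun i => NCC (nofVis k (Fin n)) A (H ⁻¹' {i}))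
            (Finset.mem_univ i)
        grw [DCC_le_mul_two_pow_NCC, hi]
        norm_num

/-- Let `A : [n]^k → [N]` and let `b < log₂ N` be a natural number.
Let `c_n` be the minimum over partitions of `[n]^k` into exactly `2^b` parts of the
maximal nondeterministic complexity of a part (so `N^h_{k,b}(A) = b + c_n`), and
define `c_d` analogously with deterministic complexity (so `D^h_{k,b}(A) = b + c_d`).
Then `c_d ≤ (k - 1) · 2^{c_n} + c_n`. -/
theorem det_help_le_exp_nondet_help (k n N b : ℕ)
    (A : (Fin k → Fin n) → Fin N)
    (hb : (b : ℝ) < Real.logb 2 (N : ℝ))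
    (cn cd : ℕ)
    (hcn : cn = sInf { m | ∃ H : (Fin k → Fin n) → Fin (2 ^ b),
        m = Finset.univ.sup fun i => NCC (nofVis k (Fin n)) A (H ⁻¹' {i}) })
    (hcd : cd = sInf { m | ∃ H : (Fin k → Fin n) → Fin (2 ^ b),
        m = Finset.univ.sup fun i => DCC (nofVis k (Fin n)) A (H ⁻¹' {i}) }) :
    cd ≤ (k - 1) * 2 ^ cn + cn :=
  det_help_le_exp_nondet_help_general k n N b A cn cd hcn hcd
end

section
/- Let N be a power of 2, let A : [n]^{k−1} → [N], and let f = Lift_GT(A). Then D^1_k(f) ≥ min { D^h_{k−1, log₂ N − 1}(A) / log₂ N , log₂ N }. -/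
lemma bt_length (s : List Bool → Bool) (m : ℕ) : (buildTranscript s m).length = m := by
  induction m with
  | zero => rfl
  | succ m ih => simp [buildTranscript, ih]

lemma bt_append (s : List Bool → Bool) (m : ℕ) : ∀ u, ∃ l, buildTranscript s (m + u) = buildTranscript s m ++ l := by
  intro u
  induction u with
  | zero => exact ⟨[], by simp⟩
  | succ u ih =>
    obtain ⟨l, hl⟩ := ih
    exact ⟨l ++ [s (buildTranscript s (m + u))], by
      show buildTranscript s ((m+u)+1) = _
      rw [buildTranscript, hl]; simp⟩

/-- value of a list of answer bits: bit `i` has weight `2^(b-i)`. -/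
def qval (b : ℕ) (l : List Bool) : ℕ :=
  ∑ i ∈ Finset.range l.length, if l.getD i false then 2^(b-i) else 0

lemma qval_snoc (b : ℕ) (l : List Bool) (a : Bool) :
    qval b (l ++ [a]) = qval b l + if a then 2^(b - l.length) else 0 := by
  unfold qval
  rw [List.length_append, List.length_singleton, Finset.sum_range_succ]
  congr 1
  · exact Finset.sum_congr rfl fun i hi => by
      rw [List.getD_append _ _ _ _ (Finset.mem_range.mp hi)]
  · rw [List.getD_append_right _ _ _ _ le_rfl]; simp

/-- next query value given answers `l` so far. -/
def qstep (b N : ℕ) (l : List Bool) : ℕ := (qval b l + 2^(b - l.length)) % N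

/-- the ideal list of binary-search answers for target value `v`. -/
def sList (b N v : ℕ) : ℕ → List Bool
  | 0 => []
  | j+1 => sList b N v j ++ [decide (qstep b N (sList b N v j) ≤ v)]

lemma sList_spec (b N v : ℕ) (hN : N = 2^(b+1)) (hv : v < N) :
    ∀ j ≤ b+1, (sList b N v j).length = j ∧ qval b (sList b N v j) ≤ v ∧
      v < qval b (sList b N v j) + 2^(b+1-j) ∧
      qval b (sList b N v j) + 2^(b+1-j) ≤ 2^(b+1) := by
  intro j
  induction j with
  | zero =>
    intro _
    refine ⟨rfl, Nat.zero_le _, ?_, ?_⟩ <;> simp [sList, qval] <;> omega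
  | succ j ih =>
    intro hj
    obtain ⟨hlen, hlo, hhi, hbound⟩ := ih (by omega)
    have h1 : b + 1 - j = (b - j) + 1 := by omega
    have h2 : b + 1 - (j+1) = b - j := by omega
    have hpowlt : (2:ℕ)^(b-j) < 2^(b+1-j) := Nat.pow_lt_pow_right one_lt_two (by omega)
    have hpow2 : (2:ℕ)^(b-j) + 2^(b-j) = 2^(b+1-j) := by rw [h1]; ring
    have hq : qstep b N (sList b N v j) = qval b (sList b N v j) + 2^(b-j) := by
      unfold qstep; rw [hlen]
      exact Nat.mod_eq_of_lt (by omega)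
    by_cases hcase : qstep b N (sList b N v j) ≤ v
    · have hd : decide (qstep b N (sList b N v j) ≤ v) = true := decide_eq_true hcase
      rw [hq] at hcase
      simp only [sList, hd, qval_snoc, hlen, if_true, List.length_append,
        List.length_singleton]
      rw [h2]
      exact ⟨trivial, by omega, by omega, by omega⟩
    · have hd : decide (qstep b N (sList b N v j) ≤ v) = false := decide_eq_false hcase
      rw [hq] at hcase
      push_neg at hcase
      simp only [sList, hd, qval_snoc, hlen, Bool.false_eq_true, if_false,
        List.length_append, List.length_singleton]
      rw [h2]
      exact ⟨trivial, by omega, by omega, by omega⟩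

lemma sList_val (b N v : ℕ) (hN : N = 2^(b+1)) (hv : v < N) :
    qval b (sList b N v (b+1)) = v := by
  obtain ⟨_, hlo, hhi, _⟩ := sList_spec b N v hN hv (b+1) le_rfl
  simp at hhi
  omega


def boolFinEquiv (a : ℕ) : (Fin a → Bool) ≃ Fin (2 ^ a) :=
  (Equiv.arrowCongr (Equiv.refl _) finTwoEquiv.symm).trans finFunctionFinEquiv

lemma dhelp_le (k n b N a c : ℕ) (hk : 2 ≤ k) (hN : N = 2 ^ (b + 1))
    (A : (Fin (k - 1) → Fin n) → Fin N)
    (P : OWProt k ((Fin (k - 1) → Fin n) × Fin N) (liftVis k (Fin n) (Fin N)) Bool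
      ⟨k - 1, by omega⟩ a c)
    (hP : ∀ z, P.run z = decide (z.2 ≤ A z.1)) (ha : a ≤ b) :
    DHelp (nofVis (k - 1) (Fin n)) A b ≤ a + (b + 1) * c := by
  have hNpos : 0 < N := by rw [hN]; positivity
  have hy0 : (0:ℕ) < N := hNpos
  have hpre : ∀ x y y', P.pre (x, y) = P.pre (x, y') := fun x y y' =>
    P.pre_nof _ _ ⟨fun j hj => rfl, Or.inl rfl⟩
  set E := boolFinEquiv a with hE
  set H : (Fin (k - 1) → Fin n) → Fin (2 ^ a) := fun x => E (P.pre (x, ⟨0, hy0⟩)) with hH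
  have hDCC : ∀ i : Fin (2 ^ a),
      DCC (nofVis (k - 1) (Fin n)) A (H ⁻¹' {i}) ≤ (b + 1) * c := by
    intro i
    set p := E.symm i with hp
    set yOf : List Bool → Fin N := fun l => ⟨qstep b N l, Nat.mod_lt _ hNpos⟩ with hyOf
    set sub : List Bool → List Bool := fun t => t.drop (t.length / c * c) with hsub
    set ansF : List Bool → List Bool := fun t =>
      (List.range (t.length / c)).map (fun j => P.out p ((t.drop (j * c)).take c)) with hansF
    have spk : ∀ s : List Bool, (P.speaker p s).val < k - 1 := by
      intro s
      have h1 := P.speaker_ne p s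
      have h2 := (P.speaker p s).isLt
      have h3 : (P.speaker p s).val ≠ k - 1 := fun h => h1 (Fin.ext h)
      omega
    set Q : DProt (k - 1) (Fin (k - 1) → Fin n) (nofVis (k - 1) (Fin n)) (Fin N)
        ((b + 1) * c) :=
      { speaker := fun t => ⟨(P.speaker p (sub t)).val, spk _⟩
        msg := fun t x => P.msg p (sub t) (x, yOf (ansF t))
        msg_nof := by
          intro t x x' hvis
          refine P.msg_nof p (sub t) _ _ ⟨?_, Or.inr rfl⟩
          intro j hj
          exact hvis j (fun hje => hj (congrArg Fin.val hje))
        out := fun t => ⟨qval b ((List.range (b + 1)).map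
            (fun j => P.out p ((t.drop (j * c)).take c))) % N, Nat.mod_lt _ hNpos⟩ } with hQ
    apply Nat.sInf_le
    refine ⟨Q, ?_⟩
    intro x hx
    have hpx : ∀ y, P.pre (x, y) = p := by
      intro y
      have hxi : E (P.pre (x, ⟨0, hy0⟩)) = i := hx
      rw [hpre x y ⟨0, hy0⟩, hp, ← hxi, Equiv.symm_apply_apply]
    set v := (A x).val with hv
    have hvN : v < N := (A x).isLt
    set stepF : List Bool → Bool := fun t => Q.msg t x with hstepF
    set T : ℕ → List Bool := fun m => buildTranscript stepF m with hT
    have key : ∀ j, j ≤ b + 1 → ∀ t' : List Bool,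
        (List.range j).map (fun jj => P.out p (((T (j * c) ++ t').drop (jj * c)).take c))
          = sList b N v j := by
      intro j
      induction j with
      | zero => intro _ t'; simp [sList]
      | succ j ih =>
        intro hj t'
        set yj : Fin N := yOf (sList b N v j) with hyj
        set bI : ℕ → List Bool :=
          fun u => buildTranscript (fun t => P.msg p t (x, yj)) u with hbI
        have inner : ∀ u, u ≤ c → T (j * c + u) = T (j * c) ++ bI u := by
          intro u
          induction u with
          | zero => intro _; simp [hbI, hT, buildTranscript]
          | succ u ihu =>
            intro hu
            have hu' : u < c := hu
            have hc : 0 < c := by omega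
            have hlenu : (T (j * c + u)).length = j * c + u := bt_length _ _
            have hdiv : (j * c + u) / c = j := by
              rw [Nat.add_comm, Nat.mul_comm, Nat.add_mul_div_left _ _ hc,
                Nat.div_eq_of_lt hu']
              omega
            have hprev := ihu (le_of_lt hu')
            have hsubt : sub (T (j * c + u)) = bI u := by
              rw [hsub]
              simp only [hlenu, hdiv]
              rw [hprev]
              exact List.drop_left' (bt_length _ _)
            have hanst : ansF (T (j * c + u)) = sList b N v j := by
              rw [hansF]
              simp only [hlenu, hdiv]
              rw [hprev]
              exact ih (by omega) (bI u)
            have e1 : T (j * c + (u + 1)) = T (j * c + u) ++ [stepF (T (j * c + u))] := rfl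
            have hstep : stepF (T (j * c + u)) = P.msg p (bI u) (x, yj) := by
              show P.msg p (sub (T (j * c + u))) (x, yOf (ansF (T (j * c + u)))) = _
              rw [hsubt, hanst]
            rw [e1, hstep, hprev, List.append_assoc]
            rfl
        have hT1 : T ((j + 1) * c) = T (j * c) ++ bI c := by
          rw [Nat.succ_mul]; exact inner c le_rfl
        have hsl : sList b N v (j + 1)
            = sList b N v j ++ [decide (qstep b N (sList b N v j) ≤ v)] := rfl
        rw [List.range_succ, List.map_append, hT1, List.map_singleton, hsl,
          List.append_assoc]
        congr 1
        · exact ih (by omega) (bI c ++ t')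
        · have hdl : ((T (j * c) ++ (bI c ++ t')).drop (j * c)).take c = bI c := by
            rw [List.drop_left' (bt_length _ _)]
            exact List.take_left' (bt_length _ _)
          rw [hdl]
          have hrun : P.out p (bI c) = P.run (x, yj) := by
            show _ = P.out (P.pre (x, yj))
              (buildTranscript (fun t => P.msg (P.pre (x, yj)) t (x, yj)) c)
            rw [hpx yj]
          rw [hrun, hP]
          congr 1
    have hfin := key (b + 1) le_rfl []
    rw [List.append_nil] at hfin
    show Q.out (buildTranscript (fun t => Q.msg t x) ((b + 1) * c)) = A x
    apply Fin.ext
    show qval b ((List.range (b + 1)).map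
        (fun jj => P.out p (((T ((b + 1) * c)).drop (jj * c)).take c))) % N = (A x).val
    rw [hfin, sList_val b N v hN hvN]
    exact Nat.mod_eq_of_lt hvN
  refine le_trans (Nat.sInf_le ⟨a, ha, H, rfl⟩) ?_
  have hsup : (Finset.univ.sup fun i => DCC (nofVis (k - 1) (Fin n)) A (H ⁻¹' {i}))
      ≤ (b + 1) * c := Finset.sup_le fun i _ => hDCC i
  omega

lemma owcc_nonempty (k n b N : ℕ) (hk : 2 ≤ k) (hN : N = 2 ^ (b + 1))
    (A : (Fin (k - 1) → Fin n) → Fin N) :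
    ∃ m, m ∈ { m | ∃ a c, m = a + c ∧
      ∃ P : OWProt k ((Fin (k - 1) → Fin n) × Fin N) (liftVis k (Fin n) (Fin N)) Bool
        ⟨k - 1, by omega⟩ a c,
      ∀ z, P.run z = (fun z => decide (z.2 ≤ A z.1)) z } := by
  set E2 := boolFinEquiv (b + 1) with hE2
  refine ⟨(b + 1) + 1, (b + 1), 1, rfl, ?_⟩
  refine ⟨{ pre := fun z => E2.symm (Fin.cast hN (A z.1))
            pre_nof := ?_
            speaker := fun _ _ => ⟨0, by omega⟩
            speaker_ne := ?_
            msg := fun p _ z => decide (z.2 ≤ Fin.cast hN.symm (E2 p))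
            msg_nof := ?_
            out := fun _ t => t.headI }, ?_⟩
  · intro z z' hvis
    have h1 : z.1 = z'.1 := by
      funext j
      exact hvis.1 j (show (j:ℕ) ≠ k - 1 from by have := j.isLt; omega)
    show E2.symm (Fin.cast hN (A z.1)) = E2.symm (Fin.cast hN (A z'.1))
    rw [h1]
  · intro p t
    intro h
    have := congrArg Fin.val h
    simp at this
    omega
  · intro p t z z' hvis
    rcases hvis.2 with h | h
    · exact absurd h (show (0:ℕ) ≠ k - 1 from by omega)
    · show decide (z.2 ≤ Fin.cast hN.symm (E2 p)) = decide (z'.2 ≤ Fin.cast hN.symm (E2 p))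
      rw [h]
  · intro z
    show ([] ++ [_]).headI = _
    simp only [List.nil_append, List.headI]
    rw [Equiv.apply_symm_apply]
    congr 1

/-- Let `N` be a power of 2 (with `b = log₂ N - 1`, i.e.
`N = 2^(b+1)`), let `A : [n]^{k-1} → [N]`, and let `f = Lift_GT(A)` be the lift given
by `f(x, y) = 1` iff `A(x) ≥ y`.  Then
`D¹_k(f) ≥ min { D^h_{k-1, log₂ N - 1}(A) / log₂ N , log₂ N }`. -/
theorem lift_gt_one_way_lower_bound (k n b : ℕ) (hk : 2 ≤ k)
    (N : ℕ) (hN : N = 2 ^ (b + 1))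
    (A : (Fin (k - 1) → Fin n) → Fin N) :
    (OWCC (liftVis k (Fin n) (Fin N))
        (fun z => decide (z.2 ≤ A z.1)) ⟨k - 1, by omega⟩ : ℝ) ≥
      min ((DHelp (nofVis (k - 1) (Fin n)) A b : ℝ) / Real.logb 2 (N : ℝ))
        (Real.logb 2 (N : ℝ)) := by
  have hlog : Real.logb 2 (N : ℝ) = (b + 1 : ℝ) := by
    rw [hN]
    push_cast
    rw [Real.logb_pow, Real.logb_self_eq_one (by norm_num)]
    push_cast
    ring
  rw [hlog]
  obtain ⟨m0, hm0⟩ := owcc_nonempty k n b N hk hN A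
  obtain ⟨a, c, hac, P, hPc⟩ :
      ∃ a c, OWCC (liftVis k (Fin n) (Fin N))
          (fun z => decide (z.2 ≤ A z.1)) (⟨k - 1, by omega⟩ : Fin k) = a + c ∧
        ∃ P : OWProt k ((Fin (k - 1) → Fin n) × Fin N) (liftVis k (Fin n) (Fin N)) Bool
          ⟨k - 1, by omega⟩ a c,
        ∀ z, P.run z = (fun z => decide (z.2 ≤ A z.1)) z :=
    Nat.sInf_mem ⟨m0, hm0⟩
  set m := OWCC (liftVis k (Fin n) (Fin N))
    (fun z => decide (z.2 ≤ A z.1)) (⟨k - 1, by omega⟩ : Fin k) with hm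
  rcases le_or_gt (b + 1) m with hbm | hbm
  · refine le_trans (min_le_right _ _) ?_
    exact_mod_cast hbm
  · have hab : a ≤ b := by omega
    have hdh : DHelp (nofVis (k - 1) (Fin n)) A b ≤ a + (b + 1) * c :=
      dhelp_le k n b N a c hk hN A P (fun z => hPc z) hab
    have hdh2 : DHelp (nofVis (k - 1) (Fin n)) A b ≤ (b + 1) * m := by
      calc DHelp (nofVis (k - 1) (Fin n)) A b ≤ a + (b + 1) * c := hdh
        _ ≤ (b + 1) * (a + c) := by nlinarith
        _ = (b + 1) * m := by rw [hac]
    refine le_trans (min_le_left _ _) ?_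
    rw [div_le_iff₀ (by positivity)]
    calc (DHelp (nofVis (k - 1) (Fin n)) A b : ℝ) ≤ ((b + 1) * m : ℕ) := by exact_mod_cast hdh2
      _ = (m : ℝ) * (b + 1 : ℝ) := by push_cast; ring
end
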